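/- arXiv:1907.05005 — 5 statements merged into one kernel-verified Lean document; each statement's English description precedes it below -/
import Mathlib

section
/- Let θ ≥ 2 be an integer, let G be a simple graph, and let C be a cycle in G each of whose vertices has degree at most θ+1 in G. If X is any trajectory of the threshold-θ dynamics on G and at some time t one has X_t(v) = false for every vertex v of C, then X_s(v) = false for every s ≥ t and every vertex v of C. (Observation O1: a fully healthy cycle in a graph of maximum degree θ+1 remains healthy forever, since each of its vertices then has at most θ−1 infected neighbors.) -/
/-!
A vertex `v` with at most `θ + 1` neighbours, at least two of which are healthy at time `t`,
has at most `θ - 1` infected neighbours at time `t`, so it is healthy at time `t + 1`.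
On a cycle every vertex has two distinct neighbours on the cycle, so a healthy cycle of such
vertices stays healthy by induction on time.
-/

/-- A trajectory of the threshold-`θ` dynamics on a simple graph `G`: a vertex can only be
infected at time `t+1` if it had at least `θ` infected neighbors at time `t`. -/
def IsThresholdTrajectory {V : Type*} (G : SimpleGraph V) (θ : ℕ) (X : ℕ → V → Bool) : Prop :=
  ∀ t v, X (t + 1) v = true →
    ∃ S : Finset V, θ ≤ S.card ∧ ∀ u ∈ S, G.Adj v u ∧ X t u = true

namespace SimpleGraph.Walk.IsCycle

variable {V : Type*} {G : SimpleGraph V} {u v : V}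

lemma exists_adj_adj_mem_support {p : G.Walk u u} (hp : p.IsCycle) (hv : v ∈ p.support) :
    ∃ a b, a ≠ b ∧ G.Adj v a ∧ G.Adj v b ∧ a ∈ p.support ∧ b ∈ p.support := by
  obtain ⟨a, b, hab, hN⟩ := Set.ncard_eq_two.mp (hp.ncard_neighborSet_toSubgraph_eq_two hv)
  have hmem : ∀ x ∈ p.toSubgraph.neighborSet v, G.Adj v x ∧ x ∈ p.support := fun x hx =>
    ⟨hx.adj_sub, p.mem_verts_toSubgraph.mp hx.snd_mem⟩
  obtain ⟨hva, ha⟩ := hmem a (by simp [hN])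
  obtain ⟨hvb, hb⟩ := hmem b (by simp [hN])
  exact ⟨a, b, hab, hva, hvb, ha, hb⟩

end SimpleGraph.Walk.IsCycle

namespace IsThresholdTrajectory

variable {V : Type*} {G : SimpleGraph V} {θ : ℕ} {X : ℕ → V → Bool}

lemma eq_false_succ_of_healthy_neighbors (hX : IsThresholdTrajectory G θ X) {t : ℕ} {v : V}
    [Fintype (G.neighborSet v)] (H : Finset V) (hH : ∀ u ∈ H, G.Adj v u ∧ X t u = false)
    (hdeg : G.degree v < θ + H.card) : X (t + 1) v = false := by
  classical
  by_contra hv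
  obtain ⟨S, hθS, hS⟩ := hX t v (Bool.not_eq_false _ ▸ hv)
  have hdisj : Disjoint S H := Finset.disjoint_left.mpr fun u huS huH => by
    simpa [(hH u huH).2] using (hS u huS).2
  have hsub : S ∪ H ⊆ G.neighborFinset v := fun u hu => by
    rw [SimpleGraph.mem_neighborFinset]
    rcases Finset.mem_union.mp hu with huS | huH
    exacts [(hS u huS).1, (hH u huH).1]
  have := Finset.card_le_card hsub
  rw [Finset.card_union_of_disjoint hdisj, SimpleGraph.card_neighborFinset_eq_degree] at this
  omega

lemma eq_false_of_le [∀ v, Fintype (G.neighborSet v)] (hX : IsThresholdTrajectory G θ X)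
    {C : Set V}
    (hC : ∀ v ∈ C, ∃ H : Finset V, ↑H ⊆ C ∧ (∀ u ∈ H, G.Adj v u) ∧ G.degree v < θ + H.card)
    {t : ℕ} (ht : ∀ v ∈ C, X t v = false) : ∀ s, t ≤ s → ∀ v ∈ C, X s v = false := by
  intro s hs
  induction s, hs using Nat.le_induction with
  | base => exact ht
  | succ s _ ih =>
    intro v hv
    obtain ⟨H, hHC, hadj, hdeg⟩ := hC v hv
    exact hX.eq_false_succ_of_healthy_neighbors H (fun u hu => ⟨hadj u hu, ih u (hHC hu)⟩) hdeg

end IsThresholdTrajectory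

theorem healthy_cycle_stays_healthy_general {V : Type*} (G : SimpleGraph V)
    [inst : ∀ u : V, Fintype (G.neighborSet u)]
    (θ : ℕ) {v : V} (w : G.Walk v v) (hw : w.IsCycle)
    (hdeg : ∀ u ∈ w.support, G.degree u ≤ θ + 1)
    (X : ℕ → V → Bool) (hX : IsThresholdTrajectory G θ X)
    (t : ℕ) (ht : ∀ u ∈ w.support, X t u = false) :
    ∀ s, t ≤ s → ∀ u ∈ w.support, X s u = false := by
  classical
  refine hX.eq_false_of_le (C := {u | u ∈ w.support}) (fun u hu => ?_) ht
  obtain ⟨a, b, hab, hua, hub, ha, hb⟩ := hw.exists_adj_adj_mem_support hu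
  refine ⟨{a, b}, ?_, ?_, ?_⟩
  · simp [Set.insert_subset_iff, ha, hb]
  · simp [hua, hub]
  · rw [Finset.card_pair hab]
    have := hdeg u hu
    omega

/-- **Observation O1.** A fully healthy cycle, each of whose vertices has degree at most `θ+1`
in `G`, remains healthy forever under the threshold-`θ` dynamics. -/
theorem healthy_cycle_stays_healthy {V : Type*} (G : SimpleGraph V)
    [inst : ∀ u : V, Fintype (G.neighborSet u)]
    (θ : ℕ) (hθ : 2 ≤ θ) {v : V} (w : G.Walk v v) (hw : w.IsCycle)
    (hdeg : ∀ u ∈ w.support, G.degree u ≤ θ + 1)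
    (X : ℕ → V → Bool) (hX : IsThresholdTrajectory G θ X)
    (t : ℕ) (ht : ∀ u ∈ w.support, X t u = false) :
    ∀ s, t ≤ s → ∀ u ∈ w.support, X s u = false :=
  healthy_cycle_stays_healthy_general G (inst := inst) θ w hw hdeg X hX t ht
end

section
/- Quantitative conditional form of Theorem 1.2: let θ ≥ 2 be an integer, p ∈ (0,1), and let G be a finite simple graph on vertex set V in which every vertex has degree at most θ+1. Suppose C₁, …, C_m are cycles in G, each of length at most L, such that every vertex of G lies on at least one C_l. Then for every integer T ≥ 1 and every initial infected set X₀ ⊆ V, the threshold-θ contact process on G satisfies P( X_{mT} ≠ ∅ ) ≤ m·(1 − (1−p)^L)^T. In particular, if the cycles covering G have length at most κ log n, the process dies out in time polynomial in n with probability at least 1 − n e^{−n}. -/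
open MeasureTheory ProbabilityTheory

/-- For `W ⊆ V`, `starSet G l W = W^{*l}` is the set of vertices having at least `l`
neighbors in `W`. -/
noncomputable def starSet {V : Type*} [Fintype V] (G : SimpleGraph V) (l : ℕ)
    (W : Finset V) : Finset V :=
  letI := Classical.dec
  Finset.univ.filter fun v => l ≤ (W.filter fun u => G.Adj v u).card

/-- The discrete-time threshold-`θ` contact process with infection probability `p` and initial
infected set `X0`, driven by the field `ω` of `[0,1]`-valued random variables:
`X_{t+1} = {v ∈ (X_t)^{*θ} : ω(t+1, v) ≤ p}`. -/
noncomputable def tcp {V : Type*} [Fintype V] (G : SimpleGraph V) (θ : ℕ) (p : ℝ)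
    (X0 : Finset V) (ω : ℕ × V → ℝ) : ℕ → Finset V
  | 0 => X0
  | t + 1 =>
      letI := Classical.dec
      (starSet G θ (tcp G θ p X0 ω t)).filter fun v => ω (t + 1, v) ≤ p

/-- `P` is the law of an i.i.d. field of Uniform`[0,1]` random variables indexed by `ℕ × V`,
i.e. the infinite product of uniform measures on `[0,1]`: the coordinate maps are independent
and each is uniformly distributed on `[0,1]`. -/
def IsIIDUniform {V : Type*} (P : Measure ((ℕ × V) → ℝ)) : Prop :=
  IsProbabilityMeasure P ∧
    iIndepFun (fun (i : ℕ × V) (ω : (ℕ × V) → ℝ) => ω i) P ∧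
    ∀ i : ℕ × V, P.map (fun ω => ω i) = volume.restrict (Set.Icc (0 : ℝ) 1)

/-!
Every vertex of a cycle has two neighbours on the cycle, so when all degrees are at most `θ + 1`
a vertex of a fully healthy cycle has at most `θ - 1` infected neighbours: a healthy cycle stays
healthy forever. A cycle of length at most `L` becomes healthy at a given step as soon as all of
its vertices fail their infection coin, which has probability at least `(1 - p) ^ L`. Devote the
`l`-th block of `T` steps to the `l`-th cycle: if the process survives until time `m * T`, then
for some `l` every step of the `l`-th block fails to heal the `l`-th cycle. These steps use
disjoint sets of coins, so this has probability at most `(1 - (1 - p) ^ L) ^ T`, and a union bound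
over the `m` cycles concludes.
-/

namespace SimpleGraph

variable {V : Type*} {G : SimpleGraph V}

lemma Walk.card_support_toFinset_le_length [DecidableEq V] {u : V} {c : G.Walk u u}
    (hc : ¬c.Nil) : c.support.toFinset.card ≤ c.length := by
  have hu : u ∈ c.support.tail := c.end_mem_tail_support hc
  calc c.support.toFinset.card = c.support.tail.toFinset.card := by
        nth_rw 1 [← c.cons_tail_support]
        rw [List.toFinset_cons, Finset.insert_eq_of_mem (List.mem_toFinset.mpr hu)]
    _ ≤ c.support.tail.length := List.toFinset_card_le _
    _ = c.length := by simp

lemma Walk.IsCycle.exists_adj_ne_mem_support {u v : V} {c : G.Walk u u} (hc : c.IsCycle)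
    (hv : v ∈ c.support) :
    ∃ a b, a ≠ b ∧ G.Adj v a ∧ G.Adj v b ∧ a ∈ c.support ∧ b ∈ c.support := by
  obtain ⟨a, b, hab, hN⟩ := Set.ncard_eq_two.mp (hc.ncard_neighborSet_toSubgraph_eq_two hv)
  have ha : c.toSubgraph.Adj v a := by simp [← Subgraph.mem_neighborSet, hN]
  have hb : c.toSubgraph.Adj v b := by simp [← Subgraph.mem_neighborSet, hN]
  exact ⟨a, b, hab, ha.adj_sub, hb.adj_sub, Walk.mem_support_of_adj_toSubgraph ha.symm,
    Walk.mem_support_of_adj_toSubgraph hb.symm⟩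

lemma Walk.IsCycle.card_filter_adj_add_two_le_degree [DecidableEq V] [DecidableRel G.Adj]
    [∀ v, Fintype (G.neighborSet v)] {u v : V} {c : G.Walk u u} (hc : c.IsCycle)
    (hv : v ∈ c.support) {X : Finset V} (hX : Disjoint c.support.toFinset X) :
    (X.filter (G.Adj v)).card + 2 ≤ G.degree v := by
  obtain ⟨a, b, hab, ha, hb, haS, hbS⟩ := hc.exists_adj_ne_mem_support hv
  have hdisj : Disjoint (X.filter (G.Adj v)) {a, b} := by
    refine Finset.disjoint_left.mpr fun w hw hwab => ?_
    have hwS : w ∈ c.support.toFinset := by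
      rcases Finset.mem_insert.mp hwab with rfl | hw'
      · simpa using haS
      · simpa [Finset.mem_singleton.mp hw'] using hbS
    exact Finset.disjoint_left.mp hX hwS (Finset.mem_filter.mp hw).1
  have hsub : X.filter (G.Adj v) ∪ {a, b} ⊆ G.neighborFinset v := by
    intro w hw
    rcases Finset.mem_union.mp hw with hw | hw
    · simpa using (Finset.mem_filter.mp hw).2
    · rcases Finset.mem_insert.mp hw with rfl | hw
      · simpa using ha
      · simpa [Finset.mem_singleton.mp hw] using hb
  calc (X.filter (G.Adj v)).card + 2 = (X.filter (G.Adj v) ∪ {a, b}).card := by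
        rw [Finset.card_union_of_disjoint hdisj, Finset.card_pair hab]
    _ ≤ G.degree v := by rw [← card_neighborFinset_eq_degree]; exact Finset.card_le_card hsub

end SimpleGraph

section ContactProcess

variable {V : Type*} [Fintype V] {G : SimpleGraph V}

lemma mem_starSet [DecidableRel G.Adj] {θ : ℕ} {X : Finset V} {v : V} :
    v ∈ starSet G θ X ↔ θ ≤ (X.filter (G.Adj v)).card := by
  simp only [starSet, Finset.mem_filter, Finset.mem_univ, true_and]
  convert Iff.rfl

lemma disjoint_starSet_of_isCycle [DecidableEq V] [∀ v, Fintype (G.neighborSet v)] {θ : ℕ}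
    {u : V} {c : G.Walk u u} (hc : c.IsCycle) (hdeg : ∀ v ∈ c.support, G.degree v ≤ θ + 1)
    {X : Finset V} (hX : Disjoint c.support.toFinset X) :
    Disjoint c.support.toFinset (starSet G θ X) := by
  classical
  refine Finset.disjoint_left.mpr fun v hv hvX => ?_
  rw [List.mem_toFinset] at hv
  have hcard := hc.card_filter_adj_add_two_le_degree hv hX
  have hθ := mem_starSet.mp hvX
  have hdegv := hdeg v hv
  omega

variable {θ : ℕ} {p : ℝ} {X0 : Finset V} {ω : ℕ × V → ℝ}

lemma mem_tcp_succ {t : ℕ} {v : V} :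
    v ∈ tcp G θ p X0 ω (t + 1) ↔ v ∈ starSet G θ (tcp G θ p X0 ω t) ∧ ω (t + 1, v) ≤ p := by
  rw [tcp]
  exact Finset.mem_filter

lemma disjoint_tcp_succ {S : Finset V} {t : ℕ} (h : ∀ v ∈ S, p < ω (t + 1, v)) :
    Disjoint S (tcp G θ p X0 ω (t + 1)) :=
  Finset.disjoint_left.mpr fun v hv hvX => (h v hv).not_ge (mem_tcp_succ.mp hvX).2

lemma disjoint_tcp_of_le {S : Finset V} (hS : ∀ X, Disjoint S X → Disjoint S (starSet G θ X))
    {s t : ℕ} (hst : s ≤ t) (hs : Disjoint S (tcp G θ p X0 ω s)) :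
    Disjoint S (tcp G θ p X0 ω t) := by
  induction t, hst using Nat.le_induction with
  | base => exact hs
  | succ t _ ih =>
    exact Finset.disjoint_left.mpr fun v hv hvX =>
      Finset.disjoint_left.mp (hS _ ih) hv (mem_tcp_succ.mp hvX).1

lemma tcp_ne_empty_subset_iUnion {m : ℕ} (T : ℕ) (S : Fin m → Finset V)
    (hS : ∀ l X, Disjoint (S l) X → Disjoint (S l) (starSet G θ X))
    (hcover : ∀ v, ∃ l, v ∈ S l) :
    {ω | tcp G θ p X0 ω (m * T) ≠ ∅} ⊆
      ⋃ l : Fin m, ⋂ s ∈ Finset.Ioc (l * T) (l * T + T), {ω | ∃ v ∈ S l, ω (s, v) ≤ p} := by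
  intro ω hω
  by_contra hnot
  simp only [Set.mem_iUnion, Set.mem_iInter, Set.mem_ofPred_eq, not_exists, not_forall,
    not_and, not_le, Finset.mem_Ioc] at hnot
  refine hω (Finset.eq_empty_iff_forall_notMem.mpr fun v hv => ?_)
  obtain ⟨l, hvl⟩ := hcover v
  obtain ⟨s, ⟨hs0, hsT⟩, hs⟩ := hnot l
  obtain ⟨s, rfl⟩ : ∃ s', s = s' + 1 := ⟨s - 1, by omega⟩
  have hlm : l * T + T ≤ m * T := by simpa [add_one_mul] using Nat.mul_le_mul_right T l.isLt
  have hdisj := disjoint_tcp_of_le (X0 := X0) (hS l) (hsT.trans hlm) (disjoint_tcp_succ hs)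
  exact Finset.disjoint_left.mp hdisj hvl hv

end ContactProcess

open Function in
lemma ProbabilityTheory.iIndep.measure_biInter_eq_prod {Ω ι κ : Type*} {mΩ : MeasurableSpace Ω}
    {μ : Measure Ω} [IsProbabilityMeasure μ] {m : ι → MeasurableSpace Ω} (h_le : ∀ i, m i ≤ mΩ)
    (h : iIndep m μ) {K : κ → Set ι} (hK : Pairwise (Disjoint on K)) {E : κ → Set Ω}
    (hE : ∀ k, MeasurableSet[⨆ i ∈ K k, m i] (E k)) (F : Finset κ) :
    μ (⋂ k ∈ F, E k) = ∏ k ∈ F, μ (E k) := by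
  classical
  induction F using Finset.induction_on with
  | empty => simp
  | insert a F ha ih =>
    have hdisj : Disjoint (K a) (⋃ k ∈ F, K k) :=
      Set.disjoint_iUnion₂_right.mpr fun k hk => hK (ne_of_mem_of_not_mem hk ha).symm
    have hF : MeasurableSet[⨆ i ∈ ⋃ k ∈ F, K k, m i] (⋂ k ∈ F, E k) :=
      MeasurableSet.biInter F.countable_toSet fun k hk =>
        (biSup_mono fun i hi => Set.mem_biUnion hk hi : (⨆ i ∈ K k, m i) ≤ _) _ (hE k)
    rw [Finset.set_biInter_insert, Finset.prod_insert ha, ← ih]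
    exact (Indep_iff _ _ μ).mp (indep_iSup_of_disjoint h_le h hdisj) _ _ (hE a) hF

namespace IsIIDUniform

variable {V : Type*} {P : Measure ((ℕ × V) → ℝ)} {p : ℝ}

lemma measure_coord_preimage_Ioi (hP : IsIIDUniform P) (hp : 0 ≤ p) (i : ℕ × V) :
    P ((fun ω => ω i) ⁻¹' Set.Ioi p) = ENNReal.ofReal (1 - p) := by
  have hIoc : Set.Ioi p ∩ Set.Icc 0 1 = Set.Ioc p 1 := by
    ext x
    simp only [Set.mem_inter_iff, Set.mem_Ioi, Set.mem_Icc, Set.mem_Ioc]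
    constructor
    · rintro ⟨hpx, -, hx1⟩
      exact ⟨hpx, hx1⟩
    · rintro ⟨hpx, hx1⟩
      exact ⟨hpx, hp.trans hpx.le, hx1⟩
  rw [← Measure.map_apply (measurable_pi_apply i) measurableSet_Ioi, hP.2.2 i,
    Measure.restrict_apply measurableSet_Ioi, hIoc, Real.volume_Ioc]

lemma measure_exists_coord_le (hP : IsIIDUniform P) (hp0 : 0 ≤ p) (hp1 : p ≤ 1)
    (S : Finset V) (s : ℕ) :
    P {ω | ∃ v ∈ S, ω (s, v) ≤ p} = ENNReal.ofReal (1 - (1 - p) ^ S.card) := by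
  have := hP.1
  have hcompl : {ω | ∃ v ∈ S, ω (s, v) ≤ p} =
      (⋂ v ∈ S, (fun ω : (ℕ × V) → ℝ => ω (s, v)) ⁻¹' Set.Ioi p)ᶜ := by
    ext ω
    simp
  have hall : P (⋂ v ∈ S, (fun ω : (ℕ × V) → ℝ => ω (s, v)) ⁻¹' Set.Ioi p) =
      ENNReal.ofReal ((1 - p) ^ S.card) := by
    rw [(hP.2.1.precomp (Prod.mk_right_injective s)).measure_inter_preimage_eq_mul S
      fun _ _ => measurableSet_Ioi]
    simp only [measure_coord_preimage_Ioi hP hp0, Finset.prod_const]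
    rw [ENNReal.ofReal_pow (by linarith)]
  rw [hcompl, prob_compl_eq_one_sub (S.measurableSet_biInter fun v _ =>
    measurableSet_Ioi.preimage (measurable_pi_apply _)), hall,
    ENNReal.ofReal_sub _ (by positivity), ENNReal.ofReal_one]

lemma measure_biInter_exists_coord_le (hP : IsIIDUniform P) (hp0 : 0 ≤ p) (hp1 : p ≤ 1)
    (S : Finset V) (F : Finset ℕ) :
    P (⋂ s ∈ F, {ω | ∃ v ∈ S, ω (s, v) ≤ p}) =
      ENNReal.ofReal (1 - (1 - p) ^ S.card) ^ F.card := by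
  have := hP.1
  let m : ℕ × V → MeasurableSpace ((ℕ × V) → ℝ) := fun i => .comap (fun ω => ω i) inferInstance
  have hmeas (s : ℕ) : MeasurableSet[⨆ i ∈ ({s} ×ˢ S : Set (ℕ × V)), m i]
      {ω | ∃ v ∈ S, ω (s, v) ≤ p} := by
    have hunion : {ω : (ℕ × V) → ℝ | ∃ v ∈ S, ω (s, v) ≤ p} =
        ⋃ v ∈ S, (fun ω => ω (s, v)) ⁻¹' Set.Iic p := by
      ext ω
      simp
    rw [hunion]
    refine S.measurableSet_biUnion fun v hv => ?_
    refine le_iSup₂ (f := fun i (_ : i ∈ ({s} ×ˢ S : Set (ℕ × V))) => m i) (s, v) (by simp [hv])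
      _ ?_
    exact MeasurableSpace.measurableSet_comap.mpr ⟨_, measurableSet_Iic, rfl⟩
  rw [iIndep.measure_biInter_eq_prod (fun i => (measurable_pi_apply i).comap_le)
    ((iIndepFun_iff_iIndep _ _ _).mp hP.2.1)
    (fun s s' hss' => Set.disjoint_prod.mpr (Or.inl (Set.disjoint_singleton.mpr hss'))) hmeas]
  simp only [measure_exists_coord_le hP hp0 hp1, Finset.prod_const]

end IsIIDUniform

theorem tcp_dies_on_cycle_covered_graph_general {V : Type*} [Fintype V] (G : SimpleGraph V)
    [inst : ∀ u : V, Fintype (G.neighborSet u)]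
    (θ : ℕ) (p : ℝ) (hp : p ∈ Set.Ioo (0 : ℝ) 1)
    (hdeg : ∀ u : V, G.degree u ≤ θ + 1)
    (m L : ℕ) (base : Fin m → V) (C : ∀ l : Fin m, G.Walk (base l) (base l))
    (hcyc : ∀ l, (C l).IsCycle) (hlen : ∀ l, (C l).length ≤ L)
    (hcover : ∀ u : V, ∃ l, u ∈ (C l).support)
    (P : Measure ((ℕ × V) → ℝ)) (hP : IsIIDUniform P)
    (T : ℕ) (X0 : Finset V) :
    P {ω | tcp G θ p X0 ω (m * T) ≠ ∅} ≤
      ENNReal.ofReal ((m : ℝ) * (1 - (1 - p) ^ L) ^ T) := by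
  classical
  obtain ⟨hp0, hp1⟩ := hp
  let S (l : Fin m) : Finset V := (C l).support.toFinset
  have hblock (l : Fin m) :
      P (⋂ s ∈ Finset.Ioc (l * T) (l * T + T), {ω | ∃ v ∈ S l, ω (s, v) ≤ p}) ≤
        ENNReal.ofReal (1 - (1 - p) ^ L) ^ T := by
    rw [hP.measure_biInter_exists_coord_le hp0.le hp1.le, Nat.card_Ioc, Nat.add_sub_cancel_left]
    have hS : (S l).card ≤ L := ((C l).card_support_toFinset_le_length (hcyc l).not_nil).trans
      (hlen l)
    refine pow_le_pow_left₀ zero_le (ENNReal.ofReal_le_ofReal ?_) T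
    exact sub_le_sub_left (pow_le_pow_of_le_one (by linarith) (by linarith) hS) 1
  calc P {ω | tcp G θ p X0 ω (m * T) ≠ ∅}
      ≤ P (⋃ l : Fin m, ⋂ s ∈ Finset.Ioc (l * T) (l * T + T), {ω | ∃ v ∈ S l, ω (s, v) ≤ p}) :=
        measure_mono <| tcp_ne_empty_subset_iUnion T S
          (fun l _ hX => disjoint_starSet_of_isCycle (hcyc l) (fun v _ => hdeg v) hX)
          (fun v => (hcover v).imp fun _ hv => List.mem_toFinset.mpr hv)
    _ ≤ ∑ l : Fin m, ENNReal.ofReal (1 - (1 - p) ^ L) ^ T :=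
        (measure_iUnion_fintype_le P _).trans (Finset.sum_le_sum fun l _ => hblock l)
    _ = ENNReal.ofReal ((m : ℝ) * (1 - (1 - p) ^ L) ^ T) := by
        have hr : 0 ≤ 1 - (1 - p) ^ L := sub_nonneg.mpr (pow_le_one₀ (by linarith) (by linarith))
        rw [Finset.sum_const, Finset.card_univ, Fintype.card_fin, nsmul_eq_mul,
          ENNReal.ofReal_mul (by positivity), ENNReal.ofReal_natCast, ENNReal.ofReal_pow hr]

/-- Quantitative conditional form of Theorem 1.2: if a graph of maximum degree `θ+1` is covered
by `m` cycles of length at most `L`, then the threshold-`θ` contact process dies out by time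
`m·T` except with probability at most `m·(1-(1-p)^L)^T`. -/
theorem tcp_dies_on_cycle_covered_graph {V : Type*} [Fintype V] (G : SimpleGraph V)
    [inst : ∀ u : V, Fintype (G.neighborSet u)]
    (θ : ℕ) (hθ : 2 ≤ θ) (p : ℝ) (hp : p ∈ Set.Ioo (0 : ℝ) 1)
    (hdeg : ∀ u : V, G.degree u ≤ θ + 1)
    (m L : ℕ) (base : Fin m → V) (C : ∀ l : Fin m, G.Walk (base l) (base l))
    (hcyc : ∀ l, (C l).IsCycle) (hlen : ∀ l, (C l).length ≤ L)
    (hcover : ∀ u : V, ∃ l, u ∈ (C l).support)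
    (P : Measure ((ℕ × V) → ℝ)) (hP : IsIIDUniform P)
    (T : ℕ) (hT : 1 ≤ T) (X0 : Finset V) :
    P {ω | tcp G θ p X0 ω (m * T) ≠ ∅} ≤
      ENNReal.ofReal ((m : ℝ) * (1 - (1 - p) ^ L) ^ T) :=
  tcp_dies_on_cycle_covered_graph_general G (inst := inst) θ p hp hdeg m L base C hcyc hlen hcover P
    hP T X0
end

section
/- Conditional form of Theorem 1.1, part 1 (long survival): for every integer θ ≥ 2 and every ε ∈ (0,1) there exists a constant c = c(ε) > 0 with the following property. Let n be any positive integer and let G be any simple graph on n vertices such that every W ⊆ V with |W| ≥ ⌈(1−ε)n⌉ satisfies |W^{*θ}| ≥ ⌈(1−0.9ε)n⌉. Then for every p ≥ (1−ε)/(1−0.95ε), every initial set X₀ with |X₀| ≥ ⌈(1−ε)n⌉, and every τ ∈ ℕ, the threshold-θ contact process satisfies P( ∃ t ≤ τ with |X_t| < ⌈(1−ε)n⌉ ) ≤ τ · exp(−c n). In particular, taking τ = ⌊exp(c n / 2)⌋, the process maintains at least (1−ε)n infected vertices for exponentially long time with probability 1 − exp(−Θ(n)). -/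
open MeasureTheory ProbabilityTheory

/-!
Call a step `t → t + 1` a drop if `|X_t| ≥ m := ⌈(1-ε)n⌉` but `|X_{t+1}| < m`. As `|X_0| ≥ m`, the
bad event up to time `τ` is covered by the drops at times `t < τ`. The set `X_t` depends only on
the coins of times `≤ t`, so it is independent of the coins at time `t + 1`; given `X_t = A` with
`|A| ≥ m`, the set `X_{t+1}` keeps each of the `k ≥ (1-0.9ε)n` vertices of `A^{*θ}` independently
with probability at least `p₀ = (1-ε)/(1-0.95ε)`. Since `(1-0.9ε)p₀ = (1-ε) + εp₀/20`, the expected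
number of survivors exceeds `m - 1` by `r = εp₀n/20`, and Hoeffding's inequality bounds the
probability of a drop by `exp(-2r²/k) ≤ exp(-2(εp₀/20)² n)`.
-/

open Finset Real
open scoped ENNReal

lemma measure_exists_le_not_le_sum_range {Ω : Type*} [MeasurableSpace Ω] (μ : Measure Ω)
    {Q : ℕ → Ω → Prop} (h0 : ∀ ω, Q 0 ω) (τ : ℕ) :
    μ {ω | ∃ t ≤ τ, ¬ Q t ω} ≤ ∑ t ∈ range τ, μ {ω | Q t ω ∧ ¬ Q (t + 1) ω} := by
  induction τ with
  | zero => simp [h0]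
  | succ τ ih =>
    rw [sum_range_succ]
    refine (measure_mono ?_).trans ((measure_union_le _ _).trans (add_le_add_left ih _))
    rintro ω ⟨t, ht, hQ⟩
    by_cases hτ : ∃ t ≤ τ, ¬ Q t ω
    · exact Or.inl hτ
    · push Not at hτ
      obtain rfl : t = τ + 1 := by by_contra h; exact hQ (hτ t (by omega))
      exact Or.inr ⟨hτ τ le_rfl, hQ⟩

section CoordSigma

variable {ι β : Type*} [MeasurableSpace β]

abbrev coordSigma (S : Set ι) : MeasurableSpace (ι → β) :=
  ⨆ i ∈ S, MeasurableSpace.comap (fun ω => ω i) ‹_›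

lemma measurable_coordSigma_apply {S : Set ι} {i : ι} (hi : i ∈ S) :
    Measurable[coordSigma S] (fun ω : ι → β => ω i) :=
  measurable_iff_comap_le.2 <|
    le_iSup₂ (f := fun j (_ : j ∈ S) => MeasurableSpace.comap (fun ω : ι → β => ω j) _) i hi

lemma coordSigma_mono {S T : Set ι} (h : S ⊆ T) :
    (coordSigma S : MeasurableSpace (ι → β)) ≤ coordSigma T :=
  biSup_mono h

lemma coordSigma_le (S : Set ι) : (coordSigma S : MeasurableSpace (ι → β)) ≤ MeasurableSpace.pi :=
  iSup₂_le fun i _ => (measurable_pi_apply i).comap_le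

lemma indep_coordSigma {μ : Measure (ι → β)} (h : iIndepFun (fun i (ω : ι → β) => ω i) μ)
    {S T : Set ι} (hST : Disjoint S T) : Indep (coordSigma S) (coordSigma T) μ :=
  indep_iSup_of_disjoint (fun i => (measurable_pi_apply i).comap_le)
    ((iIndepFun_iff_iIndep _ _ _).1 h) hST

end CoordSigma

lemma ProbabilityTheory.Indep.measure_mem_le {Ω α : Type*} {m₁ m₂ : MeasurableSpace Ω}
    [mΩ : MeasurableSpace Ω] [MeasurableSpace α] [MeasurableSingletonClass α] {μ : Measure Ω}
    [IsProbabilityMeasure μ]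
    (h : Indep m₁ m₂ μ) (hm₁ : m₁ ≤ mΩ) {X : Ω → α} (hX : Measurable[m₁] X) {E : α → Set Ω}
    (hE : ∀ a, MeasurableSet[m₂] (E a)) (s : Finset α) {δ : ℝ≥0∞} (hδ : ∀ a ∈ s, μ (E a) ≤ δ) :
    μ {ω | X ω ∈ s ∧ ω ∈ E (X ω)} ≤ δ := by
  have hXa : ∀ a, MeasurableSet[m₁] (X ⁻¹' {a}) := fun a => hX (measurableSet_singleton a)
  calc μ {ω | X ω ∈ s ∧ ω ∈ E (X ω)} ≤ μ (⋃ a ∈ s, X ⁻¹' {a} ∩ E a) :=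
        measure_mono fun ω ⟨hs, hE⟩ => Set.mem_biUnion hs ⟨rfl, hE⟩
    _ ≤ ∑ a ∈ s, μ (X ⁻¹' {a} ∩ E a) := measure_biUnion_finset_le _ _
    _ = ∑ a ∈ s, μ (X ⁻¹' {a}) * μ (E a) :=
        sum_congr rfl fun a _ => (Indep_iff _ _ _).1 h _ _ (hXa a) (hE a)
    _ ≤ ∑ a ∈ s, μ (X ⁻¹' {a}) * δ := by gcongr with a ha; exact hδ a ha
    _ = μ (X ⁻¹' s) * δ := by
        rw [← sum_mul, sum_measure_preimage_singleton s fun a _ => hm₁ _ (hXa a)]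
    _ ≤ δ := mul_le_of_le_one_left (by positivity) prob_le_one

lemma measureReal_le_sum_indicator_le_exp {Ω ι : Type*} [MeasurableSpace Ω] {μ : Measure Ω}
    [IsProbabilityMeasure μ] {B : ι → Set Ω} (hB : ∀ i, MeasurableSet (B i))
    (hind : iIndepFun (fun i => (B i).indicator (1 : Ω → ℝ)) μ) {q : ℝ}
    (hq : ∀ i, μ.real (B i) ≤ q) (s : Finset ι) {r : ℝ} (hr : 0 ≤ r) :
    μ.real {ω | #s * q + r ≤ ∑ i ∈ s, (B i).indicator 1 ω} ≤ exp (-2 * r ^ 2 / #s) := by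
  set X := fun i => (B i).indicator (1 : Ω → ℝ)
  have hmean : ∀ i, μ[X i] = μ.real (B i) := fun i => integral_indicator_one (hB i)
  have hsubG : ∀ i ∈ s, HasSubgaussianMGF (fun ω => X i ω - μ[X i]) ((‖(1 : ℝ) - 0‖₊ / 2) ^ 2) μ :=
    fun i _ => hasSubgaussianMGF_of_mem_Icc (measurable_one.indicator (hB i)).aemeasurable
      (ae_of_all _ fun ω => by by_cases h : ω ∈ B i <;> simp [X, h])
  have hcent : iIndepFun (fun i ω => X i ω - μ[X i]) μ := by
    have := hind.comp (fun i (x : ℝ) => x - μ[X i]) fun _ => measurable_id.sub_const _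
    exact this
  refine (measureReal_mono fun ω hω => ?_).trans
    ((HasSubgaussianMGF.measure_sum_ge_le_of_iIndepFun hcent hsubG hr).trans_eq ?_)
  · have : ∑ i ∈ s, μ[X i] ≤ #s * q := by
      simpa [hmean] using sum_le_sum fun i (_ : i ∈ s) => hq i
    simp only [Set.mem_ofPred_eq, sum_sub_distrib] at hω ⊢
    linarith [hω]
  · congr 1
    simp only [sub_zero, nnnorm_one, one_div, inv_pow, sum_const, nsmul_eq_mul, NNReal.coe_mul,
      NNReal.coe_natCast, NNReal.coe_inv, NNReal.coe_pow, NNReal.coe_ofNat, neg_mul]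
    ring

lemma measurable_coordSigma_filter_le {V : Type*} {S : Set (ℕ × V)} {T : ℕ} (hT : ∀ v, (T, v) ∈ S)
    {F : (ℕ × V → ℝ) → Finset V} (hF : Measurable[coordSigma S] F) (p : ℝ) :
    Measurable[coordSigma S] fun ω => {v ∈ F ω | ω (T, v) ≤ p} := by
  let _ : MeasurableSpace (ℕ × V → ℝ) := coordSigma S
  refine measurable_finset_iff.2 fun v => ?_
  simp only [mem_filter]
  exact (measurable_finset_iff.1 hF v).and <| measurableSet_setOfPred.1 <|
    measurableSet_le (measurable_coordSigma_apply (hT v)) measurable_const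

lemma measureReal_restrict_Icc_Ioi {a : ℝ} (h0 : 0 ≤ a) (h1 : a ≤ 1) :
    (volume.restrict (Set.Icc (0 : ℝ) 1)).real (Set.Ioi a) = 1 - a := by
  have : Set.Ioi a ∩ Set.Icc 0 1 = Set.Ioc a 1 := by
    ext x
    simp only [Set.mem_inter_iff, Set.mem_Ioi, Set.mem_Icc, Set.mem_Ioc]
    constructor
    · exact fun ⟨hax, _, hx1⟩ => ⟨hax, hx1⟩
    · exact fun ⟨hax, hx1⟩ => ⟨hax, by linarith, hx1⟩
  rw [measureReal_restrict_apply measurableSet_Ioi, this, Real.volume_real_Ioc_of_le h1]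

lemma IsIIDUniform.measureReal_card_filter_le_lt {V : Type*} [Fintype V]
    {P : Measure ((ℕ × V) → ℝ)} (hP : IsIIDUniform P) {p₀ p : ℝ} (hp₀ : 0 ≤ p₀) (hp₀1 : p₀ ≤ 1)
    (hp : p₀ ≤ p) (T : ℕ) (S : Finset V) {m : ℕ} {r : ℝ} (hr : 0 ≤ r)
    (hm : m + r ≤ #S * p₀ + 1) :
    P.real {ω | #{v ∈ S | ω (T, v) ≤ p} < m} ≤ exp (-2 * r ^ 2 / #S) := by
  have := hP.1
  set B : V → Set ((ℕ × V) → ℝ) := fun v => {ω | p < ω (T, v)}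
  have hB : ∀ v, MeasurableSet (B v) := fun v =>
    measurableSet_lt measurable_const (measurable_pi_apply _)
  have hind : iIndepFun (fun v => (B v).indicator (1 : ((ℕ × V) → ℝ) → ℝ)) P := by
    have := (hP.2.1.precomp (g := fun v : V => (T, v)) fun v w h => (Prod.mk.inj h).2).comp
      (fun _ => (Set.Ioi p).indicator (1 : ℝ → ℝ))
      fun _ => measurable_one.indicator measurableSet_Ioi
    convert this using 2 with v
    ext ω
    simp [B, Set.indicator_apply]
  have hq : ∀ v, P.real (B v) ≤ 1 - p₀ := fun v => calc
    P.real (B v) = (P.map fun ω => ω (T, v)).real (Set.Ioi p) :=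
        (map_measureReal_apply (measurable_pi_apply _) measurableSet_Ioi).symm
    _ ≤ (volume.restrict (Set.Icc 0 1)).real (Set.Ioi p₀) := by
        rw [hP.2.2]; exact measureReal_mono (Set.Ioi_subset_Ioi hp)
    _ = 1 - p₀ := measureReal_restrict_Icc_Ioi hp₀ hp₀1
  refine le_trans (measureReal_mono fun ω hω => ?_)
    (measureReal_le_sum_indicator_le_exp hB hind hq S hr)
  have hcount : ∑ v ∈ S, (B v).indicator 1 ω = (#{v ∈ S | ¬ ω (T, v) ≤ p} : ℝ) := by
    simp [B, Set.indicator_apply, sum_boole]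
  have hsplit : (#{v ∈ S | ω (T, v) ≤ p} : ℝ) + #{v ∈ S | ¬ ω (T, v) ≤ p} = #S := by
    exact_mod_cast card_filter_add_card_filter_not _
  have hlt : (#{v ∈ S | ω (T, v) ≤ p} : ℝ) + 1 ≤ m := by exact_mod_cast (hω : _ < m)
  simp only [Set.mem_ofPred_eq, hcount]
  linarith

section ContactProcess

variable {V : Type*} [Fintype V] (G : SimpleGraph V) (θ : ℕ) (p : ℝ) (X0 : Finset V)

lemma tcp_succ (ω : ℕ × V → ℝ) (t : ℕ) :
    tcp G θ p X0 ω (t + 1) = {v ∈ starSet G θ (tcp G θ p X0 ω t) | ω (t + 1, v) ≤ p} := by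
  ext v
  rw [tcp, mem_filter]

lemma measurable_tcp (t : ℕ) :
    Measurable[coordSigma {i : ℕ × V | i.1 ≤ t}] fun ω => tcp G θ p X0 ω t := by
  induction t with
  | zero => exact measurable_const
  | succ t ih =>
    have hpast : Measurable[coordSigma {i : ℕ × V | i.1 ≤ t + 1}] fun ω => tcp G θ p X0 ω t :=
      ih.mono (coordSigma_mono fun i (hi : i.1 ≤ t) => Nat.le_succ_of_le hi) le_rfl
    simp_rw [tcp_succ]
    exact measurable_coordSigma_filter_le (fun v => le_refl (t + 1))
      ((measurable_of_countable (starSet G θ)).comp hpast) p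

lemma IsIIDUniform.measure_tcp_drop_le {P : Measure ((ℕ × V) → ℝ)} (hP : IsIIDUniform P)
    {m : ℕ} {δ : ℝ≥0∞} (t : ℕ)
    (hδ : ∀ W : Finset V, m ≤ #W → P {ω | #{v ∈ starSet G θ W | ω (t + 1, v) ≤ p} < m} ≤ δ) :
    P {ω | m ≤ #(tcp G θ p X0 ω t) ∧ ¬ m ≤ #(tcp G θ p X0 ω (t + 1))} ≤ δ := by
  have := hP.1
  have hindep := indep_coordSigma hP.2.1 (S := {i : ℕ × V | i.1 ≤ t}) (T := {i | i.1 = t + 1})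
    (Set.disjoint_left.2 fun i (h1 : i.1 ≤ t) (h2 : i.1 = t + 1) => by omega)
  have hE : ∀ W : Finset V, MeasurableSet[coordSigma {i : ℕ × V | i.1 = t + 1}]
      {ω | #{v ∈ starSet G θ W | ω (t + 1, v) ≤ p} < m} := fun W => by
    let _ : MeasurableSpace (ℕ × V → ℝ) := coordSigma {i : ℕ × V | i.1 = t + 1}
    exact measurableSet_setOfPred.2 <| (measurable_of_countable fun A : Finset V => #A < m).comp <|
      measurable_coordSigma_filter_le (fun v => rfl) measurable_const p
  refine le_trans (measure_mono fun ω ⟨h1, h2⟩ => ?_) <|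
    hindep.measure_mem_le (coordSigma_le _) (measurable_tcp G θ p X0 t) hE
      (univ.filter fun W : Finset V => m ≤ #W) fun W hW => hδ W (mem_filter.1 hW).2
  exact ⟨mem_filter.2 ⟨mem_univ _, h1⟩, by simpa [tcp_succ] using h2⟩

end ContactProcess

noncomputable def survivalProb (ε : ℝ) : ℝ := (1 - ε) / (1 - 0.95 * ε)

noncomputable def survivalRate (ε : ℝ) : ℝ := 2 * (ε * survivalProb ε / 20) ^ 2

section Constants

variable {ε : ℝ} (hε : ε ∈ Set.Ioo (0 : ℝ) 1)
include hε

lemma survivalProb_pos : 0 < survivalProb ε :=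
  div_pos (by linarith [hε.2]) (by linarith [hε.2])

lemma survivalProb_le_one : survivalProb ε ≤ 1 :=
  (div_le_one (by linarith [hε.2])).2 (by linarith [hε.1])

lemma survivalRate_pos : 0 < survivalRate ε := by
  have := survivalProb_pos hε
  have := hε.1
  unfold survivalRate
  positivity

lemma ceil_add_le_mul_survivalProb {n k : ℕ} (hk : (1 - 0.9 * ε) * n ≤ k) :
    (⌈(1 - ε) * n⌉₊ : ℝ) + ε * survivalProb ε * n / 20 ≤ k * survivalProb ε + 1 := by
  have hceil : (⌈(1 - ε) * n⌉₊ : ℝ) < (1 - ε) * n + 1 :=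
    Nat.ceil_lt_add_one (mul_nonneg (by linarith [hε.2]) (Nat.cast_nonneg' n))
  have hp₀ : survivalProb ε * (1 - 0.95 * ε) = 1 - ε :=
    div_mul_cancel₀ _ (by linarith [hε.2])
  nlinarith [survivalProb_pos hε]

lemma exp_le_exp_neg_survivalRate {n k : ℕ} (hn : 0 < n) (hk : (1 - 0.9 * ε) * n ≤ k)
    (hkn : k ≤ n) :
    exp (-2 * (ε * survivalProb ε * n / 20) ^ 2 / k) ≤ exp (-survivalRate ε * n) := by
  have hk0 : (0 : ℝ) < k := lt_of_lt_of_le (mul_pos (by linarith [hε.2]) (by exact_mod_cast hn)) hk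
  rw [exp_le_exp, survivalRate, div_le_iff₀ hk0]
  have : (k : ℝ) ≤ n := by exact_mod_cast hkn
  have : (0 : ℝ) ≤ (ε * survivalProb ε / 20) ^ 2 := sq_nonneg _
  nlinarith

end Constants

theorem tcp_long_survival_general (θ : ℕ) (ε : ℝ) (hε : ε ∈ Set.Ioo (0 : ℝ) 1) :
    ∃ c > (0 : ℝ), ∀ (n : ℕ), 0 < n → ∀ (V : Type) (_ : Fintype V), Fintype.card V = n →
      ∀ G : SimpleGraph V,
        (∀ W : Finset V, ⌈(1 - ε) * n⌉₊ ≤ W.card → ⌈(1 - 0.9 * ε) * n⌉₊ ≤ (starSet G θ W).card) →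
        ∀ p : ℝ, (1 - ε) / (1 - 0.95 * ε) ≤ p →
        ∀ X0 : Finset V, ⌈(1 - ε) * n⌉₊ ≤ X0.card →
        ∀ P : Measure ((ℕ × V) → ℝ), IsIIDUniform P → ∀ τ : ℕ,
          P {ω | ∃ t ≤ τ, (tcp G θ p X0 ω t).card < ⌈(1 - ε) * n⌉₊} ≤
            ENNReal.ofReal ((τ : ℝ) * Real.exp (-c * n)) := by
  refine ⟨survivalRate ε, survivalRate_pos hε, ?_⟩
  intro n hn V _ hcard G hexp p hp X0 hX0 P hP τ
  have := hP.1
  have hp₀ := survivalProb_pos hε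
  have := hε.1
  set m := ⌈(1 - ε) * n⌉₊
  have hstep (t : ℕ) : P {ω | m ≤ #(tcp G θ p X0 ω t) ∧ ¬ m ≤ #(tcp G θ p X0 ω (t + 1))} ≤
      ENNReal.ofReal (exp (-survivalRate ε * n)) := by
    refine hP.measure_tcp_drop_le G θ p X0 t fun W hW => ?_
    have hk : (1 - 0.9 * ε) * n ≤ #(starSet G θ W) :=
      (Nat.le_ceil _).trans (by exact_mod_cast hexp W hW)
    rw [← ofReal_measureReal]
    refine ENNReal.ofReal_le_ofReal <| (hP.measureReal_card_filter_le_lt hp₀.le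
      (survivalProb_le_one hε) hp (t + 1) _ (by positivity)
      (ceil_add_le_mul_survivalProb hε hk)).trans
      (exp_le_exp_neg_survivalRate hε hn hk (hcard ▸ card_le_univ _))
  calc P {ω | ∃ t ≤ τ, #(tcp G θ p X0 ω t) < m}
      = P {ω | ∃ t ≤ τ, ¬ m ≤ #(tcp G θ p X0 ω t)} := by simp_rw [not_le]
    _ ≤ ∑ t ∈ range τ, P {ω | m ≤ #(tcp G θ p X0 ω t) ∧ ¬ m ≤ #(tcp G θ p X0 ω (t + 1))} :=
      measure_exists_le_not_le_sum_range P (fun _ => hX0) τ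
    _ ≤ ∑ _t ∈ range τ, ENNReal.ofReal (exp (-survivalRate ε * n)) := sum_le_sum fun t _ => hstep t
    _ = ENNReal.ofReal (τ * exp (-survivalRate ε * n)) := by
      rw [sum_const, card_range, nsmul_eq_mul, ENNReal.ofReal_mul (Nat.cast_nonneg τ),
        ENNReal.ofReal_natCast]

/-- Conditional form of Theorem 1.1, part 1 (long survival): on any graph whose sets of size at
least `⌈(1-ε)n⌉` `θ`-expand to size at least `⌈(1-0.9ε)n⌉`, the threshold-`θ` contact process
with `p ≥ (1-ε)/(1-0.95ε)` started from at least `⌈(1-ε)n⌉` infected vertices stays above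
`⌈(1-ε)n⌉` infected vertices up to any time `τ`, except with probability at most `τ·exp(-cn)`. -/
theorem tcp_long_survival (θ : ℕ) (hθ : 2 ≤ θ) (ε : ℝ) (hε : ε ∈ Set.Ioo (0 : ℝ) 1) :
    ∃ c > (0 : ℝ), ∀ (n : ℕ), 0 < n → ∀ (V : Type) (_ : Fintype V), Fintype.card V = n →
      ∀ G : SimpleGraph V,
        (∀ W : Finset V, ⌈(1 - ε) * n⌉₊ ≤ W.card → ⌈(1 - 0.9 * ε) * n⌉₊ ≤ (starSet G θ W).card) →
        ∀ p : ℝ, (1 - ε) / (1 - 0.95 * ε) ≤ p →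
        ∀ X0 : Finset V, ⌈(1 - ε) * n⌉₊ ≤ X0.card →
        ∀ P : Measure ((ℕ × V) → ℝ), IsIIDUniform P → ∀ τ : ℕ,
          P {ω | ∃ t ≤ τ, (tcp G θ p X0 ω t).card < ⌈(1 - ε) * n⌉₊} ≤
            ENNReal.ofReal ((τ : ℝ) * Real.exp (-c * n)) :=
  tcp_long_survival_general θ ε hε
end

section
/- Mean-field stable fixed point: for every integer θ ≥ 2 there exists p₀ ∈ (0,1) such that for every p ∈ (p₀, 1), the function f : [0,1] → ℝ defined by f(q) = p·q^θ·((θ+1) − θq) has a fixed point q* ∈ (0,1), i.e. f(q*) = q*, at which the derivative satisfies 0 ≤ f'(q*) = p·θ·(θ+1)·q*^{θ−1}·(1−q*) < 1 (a stable fixed point). -/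
/-!
A fixed point `q > 0` of `f(q) = p·q^θ·((θ+1) - θq)` is a root of `p·h(q) = 1`, where
`h(x) = f(x)/(p x) = x^(θ-1)·((θ+1) - θx)` (`MeanField.quotient`). At such a root
`f'(q) = θ(θ+1)(1-q)/((θ+1) - θq)`, which is `< 1` exactly when `q > c := 1 - 1/θ²`
(`MeanField.threshold`, the maximiser of `h` on `[0, 1]`). Since `h(1) = 1` and, by Bernoulli's
inequality, `h(c) ≥ (1 - (θ-1)/θ²)(1 + 1/θ) = 1 + 1/θ³ > 1`, for `1/h(c) < p < 1` the
intermediate value theorem gives a root of `p·h = 1` in `(c, 1)`.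
-/

open Set

namespace MeanField

noncomputable def quotient (θ : ℕ) (x : ℝ) : ℝ := x ^ (θ - 1) * ((θ + 1) - θ * x)

noncomputable def threshold (θ : ℕ) : ℝ := 1 - 1 / (θ : ℝ) ^ 2

theorem quotient_one (θ : ℕ) : quotient θ 1 = 1 := by
  simp [quotient]

theorem continuous_quotient (θ : ℕ) : Continuous (quotient θ) := by
  unfold quotient; fun_prop

theorem threshold_nonneg {θ : ℕ} (hθ : 1 ≤ θ) : 0 ≤ threshold θ := by
  rw [threshold, sub_nonneg, div_le_one (by positivity)]
  exact one_le_pow₀ (by exact_mod_cast hθ)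

theorem threshold_le_one (θ : ℕ) : threshold θ ≤ 1 := by
  rw [threshold, sub_le_self_iff]; positivity

theorem one_lt_quotient_threshold {θ : ℕ} (hθ : 1 ≤ θ) : 1 < quotient θ (threshold θ) := by
  have ht : (1 : ℝ) ≤ θ := by exact_mod_cast hθ
  have hpow : 1 - ((θ : ℝ) - 1) / θ ^ 2 ≤ threshold θ ^ (θ - 1) := by
    have hsmall : 1 / (θ : ℝ) ^ 2 ≤ 1 := by rw [div_le_one (by positivity)]; nlinarith
    have hbern := one_add_mul_le_pow (a := -(1 / (θ : ℝ) ^ 2)) (by linarith) (θ - 1)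
    rw [Nat.cast_sub hθ, Nat.cast_one] at hbern
    calc 1 - ((θ : ℝ) - 1) / θ ^ 2 = 1 + ((θ : ℝ) - 1) * -(1 / θ ^ 2) := by ring
      _ ≤ _ := hbern
  have hfactor : (θ + 1) - θ * threshold θ = 1 + 1 / θ := by
    rw [threshold]; field_simp; ring
  calc (1 : ℝ) < (1 - ((θ : ℝ) - 1) / θ ^ 2) * (1 + 1 / θ) := by
        field_simp; nlinarith
    _ ≤ quotient θ (threshold θ) := by
        rw [quotient, hfactor]; gcongr

theorem exists_mem_Ioo_mul_quotient_eq_one (θ : ℕ) {p c : ℝ} (hc : c ≤ 1) (hp : p < 1)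
    (hpc : 1 < p * quotient θ c) : ∃ q ∈ Ioo c 1, p * quotient θ q = 1 := by
  have hcont : ContinuousOn (fun x => p * quotient θ x) (Icc c 1) :=
    (continuous_const.mul (continuous_quotient θ)).continuousOn
  exact intermediate_value_Ioo' hc hcont ⟨by simpa [quotient_one] using hp, hpc⟩

theorem hasDerivAt_map (θ : ℕ) (p x : ℝ) :
    HasDerivAt (fun x : ℝ => p * x ^ θ * ((θ + 1) - θ * x))
      (p * θ * (θ + 1) * x ^ (θ - 1) * (1 - x)) x := by
  refine (((hasDerivAt_pow θ x).const_mul p).mul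
    (((hasDerivAt_id x).const_mul (θ : ℝ)).const_sub ((θ : ℝ) + 1))).congr_deriv ?_
  rcases θ with _ | θ
  · simp
  · simp only [id, Nat.add_sub_cancel, pow_succ]; push_cast; ring

theorem map_eq_self_of_mul_quotient_eq_one {θ : ℕ} (hθ : 1 ≤ θ) {p q : ℝ}
    (hq : p * quotient θ q = 1) : p * q ^ θ * ((θ + 1) - θ * q) = q := by
  obtain ⟨n, rfl⟩ := Nat.exists_eq_add_of_le' hθ
  rw [quotient, Nat.add_sub_cancel] at hq
  linear_combination q * hq

theorem deriv_lt_one_of_mul_quotient_eq_one {θ : ℕ} {p q : ℝ} (hp : 0 < p)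
    (hcq : threshold θ < q) (hpq : p * quotient θ q = 1) :
    p * θ * (θ + 1) * q ^ (θ - 1) * (1 - q) < 1 := by
  rcases Nat.eq_zero_or_pos θ with rfl | hθ
  · simp
  have hq : 0 < q := (threshold_nonneg hθ).trans_lt hcq
  have hlin : θ * (θ + 1) * (1 - q) < (θ + 1) - θ * q := by
    rw [threshold, sub_lt_comm, lt_div_iff₀ (by positivity)] at hcq
    nlinarith
  calc p * θ * (θ + 1) * q ^ (θ - 1) * (1 - q)
      = (p * q ^ (θ - 1)) * (θ * (θ + 1) * (1 - q)) := by ring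
    _ < (p * q ^ (θ - 1)) * ((θ + 1) - θ * q) := by gcongr
    _ = p * quotient θ q := by rw [quotient]; ring
    _ = 1 := hpq

end MeanField

open MeanField in
/-- Mean-field stable fixed point: for every `θ ≥ 2` there is `p₀ ∈ (0,1)` such that for every
`p ∈ (p₀, 1)` the map `f(q) = p·q^θ·((θ+1) - θq)` has a fixed point `q* ∈ (0,1)` at which
`0 ≤ f'(q*) = p·θ·(θ+1)·q*^{θ-1}·(1-q*) < 1`. -/
theorem meanfield_stable_fixed_point (θ : ℕ) (hθ : 2 ≤ θ) :
    ∃ p₀ ∈ Set.Ioo (0 : ℝ) 1, ∀ p ∈ Set.Ioo p₀ (1 : ℝ),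
      ∃ q ∈ Set.Ioo (0 : ℝ) 1,
        p * q ^ θ * ((θ + 1) - θ * q) = q ∧
        deriv (fun x : ℝ => p * x ^ θ * ((θ + 1) - θ * x)) q =
          p * θ * (θ + 1) * q ^ (θ - 1) * (1 - q) ∧
        0 ≤ p * θ * (θ + 1) * q ^ (θ - 1) * (1 - q) ∧
        p * θ * (θ + 1) * q ^ (θ - 1) * (1 - q) < 1 := by
  have hθ₁ : 1 ≤ θ := by omega
  have hmax := one_lt_quotient_threshold hθ₁
  have hmax₀ : 0 < quotient θ (threshold θ) := one_pos.trans hmax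
  refine ⟨(quotient θ (threshold θ))⁻¹, ⟨inv_pos.2 hmax₀, inv_lt_one_of_one_lt₀ hmax⟩, ?_⟩
  rintro p ⟨hp₀, hp₁⟩
  have hp : 0 < p := (inv_pos.2 hmax₀).trans hp₀
  obtain ⟨q, ⟨hcq, hq₁⟩, hpq⟩ := exists_mem_Ioo_mul_quotient_eq_one θ (threshold_le_one θ) hp₁
    ((inv_lt_iff_one_lt_mul₀ hmax₀).1 hp₀)
  have hq : 0 < q := (threshold_nonneg hθ₁).trans_lt hcq
  exact ⟨q, ⟨hq, hq₁⟩, map_eq_self_of_mul_quotient_eq_one hθ₁ hpq,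
    (hasDerivAt_map θ p q).deriv, mul_nonneg (by positivity) (sub_nonneg.2 hq₁.le),
    deriv_lt_one_of_mul_quotient_eq_one hp hcq hpq⟩
end

section
/- Combined binomial estimate (equation (2.19) of the paper): let θ ≥ 2 be an integer, d ≥ θ+2 an integer, and q ∈ [0, 4/(θ+3)] real. If Z is a binomial random variable with d trials and success probability q, then P( Z ≥ d − θ + 1 ) ≤ ( (θ+2) · q )³. -/
/-!
A union bound over the `C(d, m)` choices of `m = d - θ + 1` trials that all succeed gives
`P(Z ≥ m) ≤ C(d, m) q^m = C(d, θ - 1) q^(d - θ - 2) q^3`. As `d` grows by one, `C(d, θ - 1)`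
grows by the factor `(d + 1)/(d - θ + 2) ≤ (θ + 3)/4`, which the extra factor `q ≤ 4/(θ + 3)`
absorbs; at `d = θ + 2` the coefficient is `C(θ + 2, 3) ≤ (θ + 2)^3`.
-/

open Finset

set_option linter.deprecated false

theorem Nat.choose_add_le_choose_mul_choose (n m i : ℕ) :
    n.choose (m + i) ≤ n.choose m * (n - m).choose i := by
  rcases le_or_gt (m + i) n with h | h
  · calc n.choose (m + i) ≤ n.choose (m + i) * (m + i).choose m :=
          Nat.le_mul_of_pos_right _ (Nat.choose_pos (Nat.le_add_right m i))
      _ = n.choose m * (n - m).choose i := by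
          rw [Nat.choose_mul (Nat.le_add_right m i), Nat.add_sub_cancel_left]
  · simp [Nat.choose_eq_zero_of_lt h]

theorem sum_Icc_choose_mul_pow_mul_pow_le {R : Type*} [CommSemiring R] [PartialOrder R]
    [IsOrderedRing R] {p r : R} (hp : 0 ≤ p) (hr : 0 ≤ r) {m n : ℕ} (hmn : m ≤ n) :
    ∑ j ∈ Icc m n, (n.choose j : R) * p ^ j * r ^ (n - j) ≤
      n.choose m * p ^ m * (p + r) ^ (n - m) := by
  rw [← Ico_add_one_right_eq_Icc, sum_Ico_eq_sum_range, add_pow, mul_sum,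
    show n + 1 - m = n - m + 1 by omega]
  refine sum_le_sum fun i _ => ?_
  have hchoose : (n.choose (m + i) : R) ≤ n.choose m * (n - m).choose i := by
    simpa using Nat.mono_cast (α := R) (Nat.choose_add_le_choose_mul_choose n m i)
  calc (n.choose (m + i) : R) * p ^ (m + i) * r ^ (n - (m + i))
      = n.choose (m + i) * (p ^ m * p ^ i * r ^ (n - m - i)) := by
        rw [pow_add, Nat.sub_add_eq, mul_assoc]
    _ ≤ n.choose m * (n - m).choose i * (p ^ m * p ^ i * r ^ (n - m - i)) := by
        gcongr
    _ = n.choose m * p ^ m * (p ^ i * r ^ (n - m - i) * (n - m).choose i) := by ring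

theorem PMF.binomial_toMeasure_setOf_le_eq_sum (p : NNReal) (hp : p ≤ 1) (n m : ℕ) :
    (PMF.binomial p hp n).toMeasure {k : Fin (n + 1) | m ≤ (k : ℕ)} =
      ↑(∑ j ∈ Icc m n, (n.choose j : NNReal) * p ^ j * (1 - p) ^ (n - j)) := by
  have hIcc : Icc m n = {j ∈ range (n + 1) | m ≤ j} := by
    ext j; simp only [mem_Icc, mem_filter, mem_range]; omega
  rw [PMF.toMeasure_apply_fintype, ENNReal.coe_finset_sum, hIcc, sum_filter,
    ← Fin.sum_univ_eq_sum_range]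
  refine sum_congr rfl fun k _ => ?_
  rw [Set.indicator_apply, PMF.binomial_apply]
  simp only [Set.mem_setOf_eq, Fin.val_last]
  split_ifs <;> push_cast <;> ring

theorem PMF.binomial_toMeasure_setOf_le_le_choose_mul_pow (p : NNReal) (hp : p ≤ 1) {m n : ℕ}
    (hmn : m ≤ n) :
    (PMF.binomial p hp n).toMeasure {k : Fin (n + 1) | m ≤ (k : ℕ)} ≤
      ↑((n.choose m : NNReal) * p ^ m) := by
  rw [PMF.binomial_toMeasure_setOf_le_eq_sum, ENNReal.coe_le_coe]
  simpa [add_tsub_cancel_of_le hp] using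
    sum_Icc_choose_mul_pow_mul_pow_le (p := p) (r := 1 - p) zero_le zero_le hmn

theorem Nat.choose_succ_mul_four_le {θ : ℕ} (hθ : 1 ≤ θ) (e : ℕ) :
    (θ + 3 + e).choose (θ - 1) * 4 ≤ (θ + 2 + e).choose (θ - 1) * (θ + 3) := by
  have hpascal := Nat.choose_mul_succ_eq (θ + 2 + e) (θ - 1)
  rw [show θ + 2 + e + 1 - (θ - 1) = e + 4 by omega, show θ + 2 + e + 1 = θ + 3 + e by omega]
    at hpascal
  refine Nat.le_of_mul_le_mul_right (c := e + 4) ?_ (by omega)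
  calc (θ + 3 + e).choose (θ - 1) * 4 * (e + 4)
      = (θ + 2 + e).choose (θ - 1) * (4 * (θ + 3 + e)) := by
        rw [mul_right_comm, ← hpascal]; ring
    _ ≤ (θ + 2 + e).choose (θ - 1) * ((θ + 3) * (e + 4)) := Nat.mul_le_mul_left _ (by nlinarith)
    _ = (θ + 2 + e).choose (θ - 1) * (θ + 3) * (e + 4) := by ring

theorem Nat.choose_mul_four_pow_le {θ : ℕ} (hθ : 1 ≤ θ) (e : ℕ) :
    (θ + 2 + e).choose (θ - 1) * 4 ^ e ≤ (θ + 2) ^ 3 * (θ + 3) ^ e := by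
  induction e with
  | zero =>
    rw [Nat.add_zero, pow_zero, mul_one, pow_zero, mul_one,
      Nat.choose_symm_of_eq_add (show θ + 2 = (θ - 1) + 3 by omega)]
    exact Nat.choose_le_pow _ _
  | succ e ih =>
    calc (θ + 2 + (e + 1)).choose (θ - 1) * 4 ^ (e + 1)
        = (θ + 3 + e).choose (θ - 1) * 4 * 4 ^ e := by
          rw [show θ + 2 + (e + 1) = θ + 3 + e by omega]; ring
      _ ≤ (θ + 2 + e).choose (θ - 1) * (θ + 3) * 4 ^ e :=
          Nat.mul_le_mul_right _ (Nat.choose_succ_mul_four_le hθ e)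
      _ = (θ + 2 + e).choose (θ - 1) * 4 ^ e * (θ + 3) := by ring
      _ ≤ (θ + 2) ^ 3 * (θ + 3) ^ e * (θ + 3) := by gcongr
      _ = (θ + 2) ^ 3 * (θ + 3) ^ (e + 1) := by ring

theorem choose_mul_pow_le_of_le_four_div {θ d : ℕ} (hθ : 1 ≤ θ) (hd : θ + 2 ≤ d) {q : ℝ}
    (hq₀ : 0 ≤ q) (hq : q ≤ 4 / ((θ : ℝ) + 3)) :
    (d.choose (d - θ + 1) : ℝ) * q ^ (d - θ + 1) ≤ (((θ : ℝ) + 2) * q) ^ 3 := by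
  obtain ⟨e, rfl⟩ := Nat.exists_eq_add_of_le hd
  have hcount : ((θ + 2 + e).choose (θ - 1) : ℝ) * 4 ^ e ≤
      ((θ : ℝ) + 2) ^ 3 * ((θ : ℝ) + 3) ^ e := by
    exact_mod_cast Nat.choose_mul_four_pow_le hθ e
  rw [show θ + 2 + e - θ + 1 = e + 3 by omega,
    Nat.choose_symm_of_eq_add (show θ + 2 + e = (e + 3) + (θ - 1) by omega)]
  calc ((θ + 2 + e).choose (θ - 1) : ℝ) * q ^ (e + 3)
      = (θ + 2 + e).choose (θ - 1) * q ^ e * q ^ 3 := by ring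
    _ ≤ (θ + 2 + e).choose (θ - 1) * (4 / ((θ : ℝ) + 3)) ^ e * q ^ 3 := by gcongr
    _ ≤ ((θ : ℝ) + 2) ^ 3 * q ^ 3 := by
        gcongr
        rwa [div_pow, ← mul_div_assoc, div_le_iff₀ (by positivity)]
    _ = (((θ : ℝ) + 2) * q) ^ 3 := by ring

/-- Combined binomial estimate (equation (2.19) of the paper): for `θ ≥ 2`, `d ≥ θ+2` and
`0 ≤ q ≤ 4/(θ+3)`, if `Z ~ Bin(d, q)` then `P(Z ≥ d-θ+1) ≤ ((θ+2)·q)³`. -/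
theorem binomial_tail_combined (θ : ℕ) (hθ : 2 ≤ θ) (d : ℕ) (hd : θ + 2 ≤ d) (q : ℝ)
    (hq : q ∈ Set.Icc (0 : ℝ) (4 / ((θ : ℝ) + 3))) :
    (PMF.binomial (Real.toNNReal q)
        (Real.toNNReal_le_one.mpr (hq.2.trans (by
          rw [div_le_one (by positivity)]
          have h2 : (2 : ℝ) ≤ (θ : ℝ) := by exact_mod_cast hθ
          linarith))) d).toMeasure
        {k : Fin (d + 1) | d - θ + 1 ≤ (k : ℕ)} ≤
      ENNReal.ofReal ((((θ : ℝ) + 2) * q) ^ 3) := by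
  refine (PMF.binomial_toMeasure_setOf_le_le_choose_mul_pow _ _ (by omega)).trans ?_
  rw [← ENNReal.ofReal_coe_nnreal, NNReal.coe_mul, NNReal.coe_pow, Real.coe_toNNReal _ hq.1,
    NNReal.coe_natCast]
  exact ENNReal.ofReal_le_ofReal (choose_mul_pow_le_of_le_four_div (by omega) hd hq.1 hq.2)
end
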